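/- arXiv:1604.05090 — 5 statements merged into one kernel-verified Lean document; each statement's English description precedes it below -/
import Mathlib

section
/- For every integer n ≥ 1, let N = 2^n and let P be the comparison matrix of the hard n-round tournament H_n. Then for every draw σ for which player 1 wins with probability 1 (i.e. wp(1,P,σ) = 1), there exists a polynomial Q with real coefficients such that for all ε ∈ (0,1), wp_ε(1,P,σ) ≤ 1 − (N−1)·ε + ε²·Q(ε). -/
/-- A perfect (balanced) binary tree of depth `n` with leaves labelled by `α`. -/
inductive BT (α : Type) : ℕ → Type
  | leaf : α → BT α 0
  | node {n : ℕ} : BT α n → BT α n → BT α (n + 1)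

namespace BT

/-- The list of leaf labels, from left to right. -/
def leaves {α : Type} : ∀ {n : ℕ}, BT α n → List α
  | _, .leaf a => [a]
  | _, .node L R => L.leaves ++ R.leaves

/-- Relabel the leaves of a tree. -/
def map {α β : Type} (f : α → β) : ∀ {n : ℕ}, BT α n → BT β n
  | _, .leaf a => .leaf (f a)
  | _, .node L R => .node (L.map f) (R.map f)

end BT

/-- Two trees represent the same draw iff one can be obtained from the other by
swapping the two children subtrees at internal nodes. -/
def BTequiv {α : Type} : ∀ {n : ℕ}, BT α n → BT α n → Prop
  | 0, .leaf a, .leaf b => a = b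
  | _ + 1, .node L R, .node L' R' =>
      (BTequiv L L' ∧ BTequiv R R') ∨ (BTequiv L R' ∧ BTequiv R L')

/-- A draw: each of the `N` players occurs exactly once among the leaves. -/
def IsDraw {N n : ℕ} (t : BT (Fin N) n) : Prop :=
  ∀ i : Fin N, t.leaves.count i = 1

/-- The winning distribution of a knockout tournament: `wd P t i` is the probability
that player `i` wins the (sub)tournament with draw `t` and comparison matrix `P`. -/
noncomputable def wd {N : ℕ} (P : Fin N → Fin N → ℝ) :
    ∀ {n : ℕ}, BT (Fin N) n → Fin N → ℝ
  | _, .leaf j => fun i => if i = j then 1 else 0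
  | _, .node L R => fun i =>
      wd P L i * (∑ j, wd P R j * P i j) + wd P R i * (∑ j, wd P L j * P i j)

/-- `P` is a comparison matrix. -/
def IsCompMatrix {N : ℕ} (P : Fin N → Fin N → ℝ) : Prop :=
  ∀ i j : Fin N, i ≠ j → 0 ≤ P i j ∧ P i j ≤ 1 ∧ P i j + P j i = 1

/-- `P` is deterministic: every off-diagonal entry is 0 or 1. -/
def IsDet {N : ℕ} (P : Fin N → Fin N → ℝ) : Prop :=
  ∀ i j : Fin N, i ≠ j → P i j = 0 ∨ P i j = 1

/-- The set `𝒫(P,ε)` of ε-perturbations of `P`. -/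
def perturbs {N : ℕ} (P : Fin N → Fin N → ℝ) (ε : ℝ) : Set (Fin N → Fin N → ℝ) :=
  {P' | IsCompMatrix P' ∧ ∀ i j : Fin N, i ≠ j → |P' i j - P i j| ≤ ε}

/-- The ε-guaranteed winning probability `wp_ε(i,P,σ)`. -/
noncomputable def wpe {N n : ℕ} (i : Fin N) (P : Fin N → Fin N → ℝ) (ε : ℝ)
    (t : BT (Fin N) n) : ℝ :=
  sInf ((fun P' => wd P' t i) '' perturbs P ε)

/-- The comparison matrix of the hard `n`-round tournament `H_n` (players 0-indexed):
for `i < j`, player `i` beats player `j` iff `i = j - 2 ^ v` where `2 ^ v` is the largest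
power of 2 dividing `j` (in 0-indexed numbering). -/
noncomputable def hardP (n : ℕ) : Fin (2 ^ n) → Fin (2 ^ n) → ℝ := fun i j =>
  if i = j then 0
  else if (i : ℕ) < (j : ℕ) then
    (if (i : ℕ) + 2 ^ padicValNat 2 (j : ℕ) = (j : ℕ) then 1 else 0)
  else
    (if (j : ℕ) + 2 ^ padicValNat 2 (i : ℕ) = (i : ℕ) then 0 else 1)

/-- The tree of depth `n` whose leaves are `s, s+1, …, s + 2^n - 1` from left to right. -/
def ordTree : (n : ℕ) → ℕ → BT ℕ n
  | 0, s => .leaf s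
  | n + 1, s => .node (ordTree n s) (ordTree n (s + 2 ^ n))

/-- The identity draw, placing players `0, 1, …, 2^n - 1` on the leaves in order. -/
def idDraw (n : ℕ) : BT (Fin (2 ^ n)) n :=
  (ordTree n 0).map (fun k => ⟨k % 2 ^ n, Nat.mod_lt _ (by positivity)⟩)

/-- `f_p(x,y) = p(x+y) + (1-2p)xy`. -/
def fp (p x y : ℝ) : ℝ := p * (x + y) + (1 - 2 * p) * x * y

/-- `B_p` on trees with real leaf labels. -/
noncomputable def Bp (p : ℝ) : ∀ {n : ℕ}, BT ℝ n → ℝ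
  | _, .leaf x => x
  | _, .node L R => fp p (Bp p L) (Bp p R)

/-- Group a list into consecutive pairs. -/
def pairList {α : Type} : List α → List (α × α)
  | a :: b :: rest => (a, b) :: pairList rest
  | _ => []

/-- The first-round matches of a draw: the consecutive sibling pairs of leaves. -/
def firstPairs {α : Type} {n : ℕ} (t : BT α n) : List (α × α) := pairList t.leaves

/-- A draw is mixed (w.r.t. the set `B` of big players) if every first-round match
pairs a big player with a small player. -/
def MixedDraw {N n : ℕ} (B : Finset (Fin N)) (t : BT (Fin N) n) : Prop :=
  ∀ q ∈ firstPairs t, ((q.1 ∈ B) ↔ q.2 ∉ B)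

/-- Number of leaves labelled `1`. -/
noncomputable def ones {n : ℕ} (t : BT ℝ n) : ℕ := t.leaves.count 1

/-- All leaf labels are `0` or `1`. -/
def ZeroOne {n : ℕ} (t : BT ℝ n) : Prop := ∀ x ∈ t.leaves, x = 0 ∨ x = 1

/-- `P[kl←t]`: the matrix agreeing with `P` except `P k l = t` and `P l k = 1 - t`. -/
def updPair {N : ℕ} (P : Fin N → Fin N → ℝ) (k l : Fin N) (t : ℝ) :
    Fin N → Fin N → ℝ :=
  fun i j => if i = k ∧ j = l then t else if i = l ∧ j = k then 1 - t else P i j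

/-- Perturb a deterministic matrix: for each pair `(w, l) ∈ S` (winner first),
set `P w l = 1 - ε` and `P l w = ε`; other entries unchanged. -/
def detPerturb {N : ℕ} (P : Fin N → Fin N → ℝ) (S : Finset (Fin N × Fin N)) (ε : ℝ) :
    Fin N → Fin N → ℝ :=
  fun i j => if (i, j) ∈ S then 1 - ε else if (j, i) ∈ S then ε else P i j

/-- Swap the result of the single match between `a` and `b`. -/
def swapPair {N : ℕ} (P : Fin N → Fin N → ℝ) (a b : Fin N) : Fin N → Fin N → ℝ :=
  fun i j => if i = a ∧ j = b then P b a else if i = b ∧ j = a then P a b else P i j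

/-- The pair `(a,b)` (with `a` the winner) is crucial for `i` in `C(P,σ)`. -/
def Crucial {N n : ℕ} (P : Fin N → Fin N → ℝ) (σ : BT (Fin N) n) (i : Fin N)
    (a b : Fin N) : Prop :=
  a ≠ b ∧ P a b = 1 ∧ wd (swapPair P a b) σ i = 0

/-! In `H_n` a lower-numbered player wins only the upsets of `j` by `j - 2 ^ v₂(j)`. Hence a
draw won by player `0` is the dyadic one: each aligned block `[s, s + 2 ^ (m + 1))` won by `s`
splits into its two aligned halves, won by `s` and `s + 2 ^ m`, since the upper players beat
every lower one except `s`, and `s + 2 ^ m` is the only upper player that `s` beats. So each of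
the `N - 1` matches is an upset. Weakening every upset to probability `1 - ε` gives a matrix in
`𝒫(P, ε)` under which `0` wins with probability exactly `(1 - ε) ^ (N - 1)`. -/

def IsTournament {α : Type} (beats : α → α → Prop) : Prop :=
  ∀ x y, x ≠ y → (beats x y ↔ ¬ beats y x)

namespace BT

variable {α : Type}

theorem length_leaves : ∀ {m : ℕ} (t : BT α m), t.leaves.length = 2 ^ m
  | _, .leaf _ => rfl
  | _, .node L R => by simp [leaves, length_leaves L, length_leaves R, pow_succ, mul_two]

variable (beats : α → α → Prop) [DecidableRel beats]

def winner : ∀ {m : ℕ}, BT α m → α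
  | _, .leaf a => a
  | _, .node L R => if beats (winner L) (winner R) then winner L else winner R

variable {beats}

theorem winner_mem_leaves : ∀ {m : ℕ} (t : BT α m), t.winner beats ∈ t.leaves
  | _, .leaf _ => by simp [winner, leaves]
  | _, .node L R => by
    unfold winner leaves
    split_ifs
    · exact List.mem_append_left _ (winner_mem_leaves L)
    · exact List.mem_append_right _ (winner_mem_leaves R)

theorem winner_of_dominant (hT : IsTournament beats) {Q : α → Prop} {m : ℕ} (t : BT α m)
    (hdom : ∀ x ∈ t.leaves, ∀ y ∈ t.leaves, Q x → ¬ Q y → beats x y)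
    (hex : ∃ x ∈ t.leaves, Q x) : Q (t.winner beats) := by
  induction t with
  | leaf a => simpa [leaves, winner] using hex
  | node L R ihL ihR =>
    simp only [leaves, List.mem_append] at hdom hex
    have hwL := winner_mem_leaves (beats := beats) L
    have hwR := winner_mem_leaves (beats := beats) R
    obtain ⟨x, hx | hx, hQx⟩ := hex
    · have hQL := ihL (fun x hx y hy => hdom x (.inl hx) y (.inl hy)) ⟨x, hx, hQx⟩
      unfold winner
      split_ifs with h
      · exact hQL
      · by_contra hQR
        exact h (hdom _ (.inl hwL) _ (.inr hwR) hQL hQR)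
    · have hQR := ihR (fun x hx y hy => hdom x (.inr hx) y (.inr hy)) ⟨x, hx, hQx⟩
      unfold winner
      split_ifs with h
      · by_contra hQL
        have hRL := hdom _ (.inr hwR) _ (.inl hwL) hQR hQL
        exact (hT (R.winner beats) (L.winner beats) fun he => hQL (he ▸ hQR)).1 hRL h
      · exact hQR

theorem exists_beaten_of_dominant (hT : IsTournament beats) {Q : α → Prop} {m : ℕ}
    (t : BT α m) (hnd : t.leaves.Nodup)
    (hdom : ∀ x ∈ t.leaves, ∀ y ∈ t.leaves, y ≠ t.winner beats → Q x → ¬ Q y → beats x y)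
    (hc : ¬ Q (t.winner beats)) (hex : ∃ x ∈ t.leaves, Q x) :
    ∃ q ∈ t.leaves, Q q ∧ beats (t.winner beats) q := by
  induction t with
  | leaf a => simp_all [leaves, winner]
  | node L R ihL ihR =>
    simp only [leaves, List.mem_append, List.nodup_append] at hdom hex hnd ⊢
    obtain ⟨hndL, hndR, hdisj⟩ := hnd
    have hwL := winner_mem_leaves (beats := beats) L
    have hwR := winner_mem_leaves (beats := beats) R
    obtain ⟨x, hx | hx, hQx⟩ := hex
    all_goals unfold winner at hdom hc ⊢
    all_goals split_ifs at hdom hc ⊢ with h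
    · obtain ⟨q, hq, hQq, hbq⟩ := ihL hndL
        (fun x hx y hy => hdom x (.inl hx) y (.inl hy)) hc ⟨x, hx, hQx⟩
      exact ⟨q, .inl hq, hQq, hbq⟩
    · have hQL : Q (L.winner beats) := winner_of_dominant hT L
        (fun x hx y hy => hdom x (.inl hx) y (.inl hy) fun he => hdisj y hy y (he ▸ hwR) rfl)
        ⟨x, hx, hQx⟩
      have hne : R.winner beats ≠ L.winner beats := fun he => hc (he ▸ hQL)
      exact ⟨_, .inl hwL, hQL, (hT _ _ hne).2 h⟩
    · have hQR : Q (R.winner beats) := winner_of_dominant hT R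
        (fun x hx y hy => hdom x (.inr hx) y (.inr hy) fun he => hdisj y (he ▸ hwL) y hy rfl)
        ⟨x, hx, hQx⟩
      exact ⟨_, .inr hwR, hQR, h⟩
    · obtain ⟨q, hq, hQq, hbq⟩ := ihR hndR
        (fun x hx y hy => hdom x (.inr hx) y (.inr hy)) hc ⟨x, hx, hQx⟩
      exact ⟨q, .inr hq, hQq, hbq⟩

end BT

section WinningDistribution

variable {N : ℕ}

def Beats (P : Fin N → Fin N → ℝ) (a b : Fin N) : Prop := P a b = 1

noncomputable instance (P : Fin N → Fin N → ℝ) : DecidableRel (Beats P) :=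
  fun _ _ => Classical.dec _

theorem isTournament_beats {P : Fin N → Fin N → ℝ} (hP : IsCompMatrix P) (hdet : IsDet P) :
    IsTournament (Beats P) := by
  intro x y hxy
  have hsum := (hP x y hxy).2.2
  unfold Beats
  rcases hdet x y hxy with h | h <;> constructor <;> intro h' <;> simp_all

theorem wd_eq_zero_of_notMem (P : Fin N → Fin N → ℝ) {m : ℕ} {t : BT (Fin N) m} {i : Fin N}
    (hi : i ∉ t.leaves) : wd P t i = 0 := by
  induction t with
  | leaf a => simp_all [wd, BT.leaves]
  | node L R ihL ihR =>
    simp only [BT.leaves, List.mem_append, not_or] at hi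
    simp [wd, ihL hi.1, ihR hi.2]

theorem wd_node_comm (P : Fin N → Fin N → ℝ) {m : ℕ} (L R : BT (Fin N) m) (i : Fin N) :
    wd P (.node L R) i = wd P (.node R L) i := by
  simp only [wd]
  ring

theorem wd_nonneg {P : Fin N → Fin N → ℝ} (hP : IsCompMatrix P) {m : ℕ} (t : BT (Fin N) m)
    (hnd : t.leaves.Nodup) (i : Fin N) : 0 ≤ wd P t i := by
  induction t generalizing i with
  | leaf a => simp only [wd]; split_ifs <;> norm_num
  | node L R ihL ihR =>
    rw [BT.leaves, List.nodup_append] at hnd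
    obtain ⟨hndL, hndR, hdisj⟩ := hnd
    have key : ∀ {k : ℕ} {A B : BT (Fin N) k}, (∀ j, 0 ≤ wd P A j) → (∀ j, 0 ≤ wd P B j) →
        (i ∈ B.leaves → i ∉ A.leaves) → 0 ≤ wd P A i * ∑ j, wd P B j * P i j := by
      intro _ A B hA hB hAB
      by_cases hiB : i ∈ B.leaves
      · simp [wd_eq_zero_of_notMem P (hAB hiB)]
      refine mul_nonneg (hA i) (Finset.sum_nonneg fun j _ => ?_)
      by_cases hji : j = i
      · simp [hji, wd_eq_zero_of_notMem P hiB]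
      · exact mul_nonneg (hB j) (hP i j (Ne.symm hji)).1
    exact add_nonneg (key (ihL hndL) (ihR hndR) fun hR hL => hdisj i hL i hR rfl)
      (key (ihR hndR) (ihL hndL) fun hL hR => hdisj i hL i hR rfl)

theorem wd_eq_ite_winner {P : Fin N → Fin N → ℝ} (hP : IsCompMatrix P) (hdet : IsDet P)
    {m : ℕ} (t : BT (Fin N) m) (hnd : t.leaves.Nodup) (i : Fin N) :
    wd P t i = if i = t.winner (Beats P) then 1 else 0 := by
  induction t generalizing i with
  | leaf a => rfl
  | node L R ihL ihR =>
    rw [BT.leaves, List.nodup_append] at hnd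
    have hne : L.winner (Beats P) ≠ R.winner (Beats P) := fun he =>
      hnd.2.2 _ (BT.winner_mem_leaves L) _ (he ▸ BT.winner_mem_leaves R) rfl
    have hsum := (hP _ _ hne).2.2
    simp only [wd, ihL hnd.1, ihR hnd.2.1, ite_mul, one_mul, zero_mul, Finset.sum_ite_eq',
      Finset.mem_univ, if_true, BT.winner, Beats]
    rcases hdet _ _ hne with h | h <;> split_ifs <;> simp_all

theorem wpe_le_wd {P P' : Fin N → Fin N → ℝ} {ε : ℝ} (hP' : P' ∈ perturbs P ε) {m : ℕ}
    {t : BT (Fin N) m} (hnd : t.leaves.Nodup) (i : Fin N) : wpe i P ε t ≤ wd P' t i :=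
  csInf_le ⟨0, by rintro _ ⟨Q, hQ, rfl⟩; exact wd_nonneg hQ.1 t hnd i⟩ ⟨P', hP', rfl⟩

theorem List.Nodup.length_le_card_of_val_mem {l : List (Fin N)} (hl : l.Nodup)
    {S : Finset ℕ} (hS : ∀ x ∈ l, (x : ℕ) ∈ S) : l.length ≤ S.card := by
  rw [← List.toFinset_card_of_nodup hl]
  exact Finset.card_le_card_of_injOn _ (fun x hx => hS x (List.mem_toFinset.1 hx))
    Fin.val_injective.injOn

/-- The leaves of `T` are the players `s, s + 1, …, s + 2 ^ m - 1` (each once, by counting). -/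
def IsBlock {m : ℕ} (T : BT (Fin N) m) (s : ℕ) : Prop :=
  T.leaves.Nodup ∧ ∀ x ∈ T.leaves, s ≤ (x : ℕ) ∧ (x : ℕ) < s + 2 ^ m

theorem isBlock_node_comm {m : ℕ} {L R : BT (Fin N) m} {s : ℕ} :
    IsBlock (.node L R) s ↔ IsBlock (.node R L) s := by
  simp only [IsBlock, BT.leaves, List.nodup_append_comm, List.mem_append, or_comm]

end WinningDistribution

section PadicVal

/-- Subtracting `2 ^ v₂(h)` clears the lowest set bit of `h`, which cannot leave the aligned
block of `h`. -/
theorem add_two_pow_padicValNat_le {m t h : ℕ} (ht : 2 ^ m ∣ t) (h₁ : t < h)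
    (h₂ : h < t + 2 ^ m) : t + 2 ^ padicValNat 2 h ≤ h := by
  have hdvd : 2 ^ padicValNat 2 h ∣ h := pow_padicValNat_dvd
  have hlt : padicValNat 2 h < m := by
    by_contra! hle
    have : 2 ^ m ∣ h - t := Nat.dvd_sub ((pow_dvd_pow 2 hle).trans hdvd) ht
    have := Nat.le_of_dvd (by omega) this
    omega
  have : 2 ^ padicValNat 2 h ∣ h - t := Nat.dvd_sub hdvd ((pow_dvd_pow 2 hlt.le).trans ht)
  have := Nat.le_of_dvd (by omega) this
  omega

variable {m s : ℕ}

theorem padicValNat_add_two_pow (hs : 2 ^ (m + 1) ∣ s) : padicValNat 2 (s + 2 ^ m) = m := by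
  obtain ⟨k, rfl⟩ := hs
  have : 2 ^ (m + 1) * k + 2 ^ m = 2 ^ m * (2 * k + 1) := by ring
  rw [this, padicValNat.mul (by positivity) (by omega), padicValNat.prime_pow,
    padicValNat.eq_zero_of_not_dvd (by omega), add_zero]

theorem two_pow_dvd_add_two_pow (hs : 2 ^ (m + 1) ∣ s) : 2 ^ m ∣ s + 2 ^ m :=
  dvd_add ((pow_dvd_pow 2 m.le_succ).trans hs) dvd_rfl

theorem add_two_pow_padicValNat_eq_iff (hs : 2 ^ (m + 1) ∣ s) {b : ℕ} (h₁ : s + 2 ^ m ≤ b)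
    (h₂ : b < s + 2 ^ (m + 1)) : s + 2 ^ padicValNat 2 b = b ↔ b = s + 2 ^ m := by
  constructor
  · intro hb
    by_contra hne
    have := add_two_pow_padicValNat_le (two_pow_dvd_add_two_pow hs)
      (by omega : s + 2 ^ m < b) (by rw [pow_succ] at h₂; omega)
    have := Nat.one_le_two_pow (n := m)
    omega
  · rintro rfl
    rw [padicValNat_add_two_pow hs]

theorem add_two_pow_padicValNat_ne (hs : 2 ^ (m + 1) ∣ s) {l h : ℕ} (hl₁ : s < l)
    (hl₂ : l < s + 2 ^ m) (hh₁ : s + 2 ^ m ≤ h) (hh₂ : h < s + 2 ^ (m + 1)) :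
    l + 2 ^ padicValNat 2 h ≠ h := by
  rcases hh₁.eq_or_lt with rfl | hlt
  · rw [padicValNat_add_two_pow hs]
    omega
  · have := add_two_pow_padicValNat_le (two_pow_dvd_add_two_pow hs) hlt
      (by rw [pow_succ] at hh₂; omega)
    omega

end PadicVal

theorem exists_one_sub_pow_eq (k : ℕ) :
    ∃ Q : Polynomial ℝ, ∀ x : ℝ, (1 - x) ^ k = 1 - k * x + x ^ 2 * Q.eval x := by
  induction k with
  | zero => exact ⟨0, by simp⟩
  | succ k ih =>
    obtain ⟨Q, hQ⟩ := ih
    refine ⟨Polynomial.C (k : ℝ) + (1 - Polynomial.X) * Q, fun x => ?_⟩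
    simp only [pow_succ _ k, hQ, Polynomial.eval_add, Polynomial.eval_mul, Polynomial.eval_C,
      Polynomial.eval_sub, Polynomial.eval_one, Polynomial.eval_X]
    push_cast
    ring

section HardTournament

variable {n : ℕ}

/-- `hardP n` with every win of a lower-numbered player weakened to probability `1 - ε`. -/
noncomputable def hardPε (n : ℕ) (ε : ℝ) : Fin (2 ^ n) → Fin (2 ^ n) → ℝ := fun i j =>
  if i = j then 0
  else if (i : ℕ) < (j : ℕ) then
    (if (i : ℕ) + 2 ^ padicValNat 2 (j : ℕ) = (j : ℕ) then 1 - ε else 0)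
  else
    (if (j : ℕ) + 2 ^ padicValNat 2 (i : ℕ) = (i : ℕ) then ε else 1)

theorem hardPε_zero : hardPε n 0 = hardP n := by
  funext i j
  simp [hardPε, hardP]

theorem hardPε_isCompMatrix {ε : ℝ} (h₀ : 0 ≤ ε) (h₁ : ε ≤ 1) : IsCompMatrix (hardPε n ε) := by
  intro i j hij
  unfold hardPε
  rcases (Fin.val_ne_of_ne hij).lt_or_gt with h | h <;>
    simp only [hij, hij.symm, h, not_lt_of_gt h, if_true, if_false] <;>
    split_ifs <;> refine ⟨?_, ?_, ?_⟩ <;> linarith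

theorem hardPε_mem_perturbs {ε : ℝ} (h₀ : 0 ≤ ε) (h₁ : ε ≤ 1) :
    hardPε n ε ∈ perturbs (hardP n) ε := by
  refine ⟨hardPε_isCompMatrix h₀ h₁, fun i j _ => ?_⟩
  rw [← hardPε_zero]
  unfold hardPε
  split_ifs <;> simp [abs_of_nonneg h₀, h₀]

theorem hardP_isCompMatrix : IsCompMatrix (hardP n) :=
  hardPε_zero (n := n) ▸ hardPε_isCompMatrix le_rfl zero_le_one

theorem hardP_isDet : IsDet (hardP n) := by
  intro i j _
  unfold hardP
  split_ifs <;> norm_num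

theorem isTournament_beats_hardP : IsTournament (Beats (hardP n)) :=
  isTournament_beats hardP_isCompMatrix hardP_isDet

variable {m : ℕ} {s : Fin (2 ^ n)}

theorem hardPε_of_upper_half (ε : ℝ) (hs : 2 ^ (m + 1) ∣ (s : ℕ)) {j : Fin (2 ^ n)}
    (h₁ : s + 2 ^ m ≤ (j : ℕ)) (h₂ : (j : ℕ) < s + 2 ^ (m + 1)) :
    hardPε n ε s j = if (j : ℕ) = s + 2 ^ m then 1 - ε else 0 := by
  have hlt : (s : ℕ) < j := by have := Nat.one_le_two_pow (n := m); omega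
  simp only [hardPε, Fin.ne_of_lt hlt, hlt, if_true, if_false,
    add_two_pow_padicValNat_eq_iff hs h₁ h₂]

theorem beats_hardP_iff (hs : 2 ^ (m + 1) ∣ (s : ℕ)) {j : Fin (2 ^ n)}
    (h₁ : s + 2 ^ m ≤ (j : ℕ)) (h₂ : (j : ℕ) < s + 2 ^ (m + 1)) :
    Beats (hardP n) s j ↔ (j : ℕ) = s + 2 ^ m := by
  rw [Beats, ← hardPε_zero, hardPε_of_upper_half 0 hs h₁ h₂]
  split_ifs <;> simp_all

theorem beats_hardP_of_upper_lower (hs : 2 ^ (m + 1) ∣ (s : ℕ)) {l h : Fin (2 ^ n)}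
    (hl₁ : (s : ℕ) < l) (hl₂ : (l : ℕ) < s + 2 ^ m) (hh₁ : s + 2 ^ m ≤ (h : ℕ))
    (hh₂ : (h : ℕ) < s + 2 ^ (m + 1)) : Beats (hardP n) h l := by
  have hlt : (l : ℕ) < h := by omega
  simp [Beats, hardP, (Fin.ne_of_lt hlt).symm, not_lt_of_gt hlt,
    add_two_pow_padicValNat_ne hs hl₁ hl₂ hh₁ hh₂]

theorem IsBlock.split_of_winner_eq (hs : 2 ^ (m + 1) ∣ (s : ℕ)) {L R : BT (Fin (2 ^ n)) m}
    (hLR : IsBlock (.node L R) s) (hL : L.winner (Beats (hardP n)) = s)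
    (hsR : Beats (hardP n) s (R.winner (Beats (hardP n)))) :
    IsBlock L s ∧ IsBlock R (s + 2 ^ m) ∧ (↑(R.winner (Beats (hardP n))) : ℕ) = s + 2 ^ m := by
  obtain ⟨hnd, hbd⟩ := hLR
  simp only [BT.leaves, List.mem_append, List.nodup_append] at hnd hbd
  obtain ⟨hndL, hndR, hdisj⟩ := hnd
  have hsL : s ∈ L.leaves := hL ▸ BT.winner_mem_leaves L
  have hbR := BT.winner_mem_leaves (beats := Beats (hardP n)) R
  have hpow : 2 ^ (m + 1) = 2 ^ m + 2 ^ m := by ring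
  have hsltR : ∀ y ∈ R.leaves, (s : ℕ) < y := fun y hy =>
    (hbd y (.inr hy)).1.lt_of_ne fun h => hdisj s hsL y hy (Fin.ext h)
  have hRup : ∃ x ∈ R.leaves, s + 2 ^ m ≤ (x : ℕ) := by
    by_contra! h
    have := hndR.length_le_card_of_val_mem (S := Finset.Ioo s (s + 2 ^ m))
      fun y hy => Finset.mem_Ioo.2 ⟨hsltR y hy, h y hy⟩
    rw [BT.length_leaves, Nat.card_Ioo] at this
    omega
  have hbup : s + 2 ^ m ≤ (↑(R.winner (Beats (hardP n))) : ℕ) :=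
    BT.winner_of_dominant isTournament_beats_hardP R (fun x hx y hy hx' hy' =>
      beats_hardP_of_upper_lower hs (hsltR y hy) (not_le.1 hy') hx' (hbd x (.inr hx)).2) hRup
  have hb := (beats_hardP_iff hs hbup (hbd _ (.inr hbR)).2).1 hsR
  have hLlow : ∀ x ∈ L.leaves, (x : ℕ) < s + 2 ^ m := by
    by_contra! ⟨x, hx, hxup⟩
    obtain ⟨q, hq, hqup, hsq⟩ := BT.exists_beaten_of_dominant isTournament_beats_hardP L hndL
      (fun x hx y hy hys hx' hy' => beats_hardP_of_upper_lower hs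
        ((hbd y (.inl hy)).1.lt_of_ne fun h => hys (hL ▸ Fin.ext h.symm)) (not_le.1 hy') hx'
        (hbd x (.inl hx)).2)
      (by rw [hL]; simp) ⟨x, hx, hxup⟩
    rw [hL, beats_hardP_iff hs hqup (hbd q (.inl hq)).2, ← hb] at hsq
    exact hdisj q hq _ hbR (Fin.ext hsq)
  have hRup_all : ∀ y ∈ R.leaves, s + 2 ^ m ≤ (y : ℕ) := by
    by_contra! ⟨y, hy, hylow⟩
    have := (List.nodup_cons.2 ⟨fun h => hdisj y h y hy rfl, hndL⟩).length_le_card_of_val_mem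
      (S := Finset.Ico s (s + 2 ^ m)) fun x hx => by
        rcases List.mem_cons.1 hx with rfl | hx
        · exact Finset.mem_Ico.2 ⟨(hbd x (.inr hy)).1, hylow⟩
        · exact Finset.mem_Ico.2 ⟨(hbd x (.inl hx)).1, hLlow x hx⟩
    rw [List.length_cons, BT.length_leaves, Nat.card_Ico] at this
    omega
  exact ⟨⟨hndL, fun x hx => ⟨(hbd x (.inl hx)).1, hLlow x hx⟩⟩,
    ⟨hndR, fun x hx => ⟨hRup_all x hx, by have := (hbd x (.inr hx)).2; omega⟩⟩, hb⟩

theorem IsBlock.wd_hardPε_node (ε : ℝ) (hs : 2 ^ (m + 1) ∣ (s : ℕ)) {L R : BT (Fin (2 ^ n)) m}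
    (hLR : IsBlock (.node L R) s) (hL : L.winner (Beats (hardP n)) = s)
    (hsR : Beats (hardP n) s (R.winner (Beats (hardP n)))) :
    wd (hardPε n ε) (.node L R) s =
      wd (hardPε n ε) L s * (wd (hardPε n ε) R (R.winner (Beats (hardP n))) * (1 - ε)) := by
  obtain ⟨-, ⟨-, hRbd⟩, hb⟩ := hLR.split_of_winner_eq hs hL hsR
  have hsR : s ∉ R.leaves := fun h => by have := (hRbd s h).1; omega
  have hupper : ∀ j ∈ R.leaves, hardPε n ε s j = if (j : ℕ) = s + 2 ^ m then 1 - ε else 0 :=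
    fun j hj => hardPε_of_upper_half ε hs (hRbd j hj).1 (by have := (hRbd j hj).2; omega)
  simp only [wd, wd_eq_zero_of_notMem _ hsR, zero_mul, add_zero]
  rw [Finset.sum_eq_single (R.winner (Beats (hardP n)))]
  · rw [hupper _ (BT.winner_mem_leaves R), if_pos hb]
  · intro j _ hj
    by_cases hjR : j ∈ R.leaves
    · rw [hupper j hjR, if_neg fun h => hj (Fin.ext (h.trans hb.symm)), mul_zero]
    · rw [wd_eq_zero_of_notMem _ hjR, zero_mul]
  · simp

theorem IsBlock.wd_hardPε_eq (ε : ℝ) {m : ℕ} {T : BT (Fin (2 ^ n)) m} {s : Fin (2 ^ n)}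
    (hs : 2 ^ m ∣ (s : ℕ)) (hT : IsBlock T s) (hwin : T.winner (Beats (hardP n)) = s) :
    wd (hardPε n ε) T s = (1 - ε) ^ (2 ^ m - 1) := by
  induction m generalizing s with
  | zero =>
    rcases T with ⟨a⟩
    simp [wd, ← hwin, BT.winner]
  | succ m ih =>
    rcases T with _ | ⟨L, R⟩
    have hexp : 2 ^ (m + 1) - 1 = (2 ^ m - 1) + (2 ^ m - 1) + 1 := by
      have := Nat.one_le_two_pow (n := m)
      rw [pow_succ]
      omega
    have key : ∀ {A B : BT (Fin (2 ^ n)) m}, IsBlock (.node A B) s →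
        A.winner (Beats (hardP n)) = s → Beats (hardP n) s (B.winner (Beats (hardP n))) →
        wd (hardPε n ε) (.node A B) s = (1 - ε) ^ (2 ^ (m + 1) - 1) := by
      intro A B hAB hA hsB
      obtain ⟨hAblock, hBblock, hb⟩ := hAB.split_of_winner_eq hs hA hsB
      rw [hAB.wd_hardPε_node ε hs hA hsB, ih ((pow_dvd_pow 2 m.le_succ).trans hs) hAblock hA,
        ih (hb ▸ two_pow_dvd_add_two_pow hs) (hb ▸ hBblock) rfl, hexp, pow_succ, pow_add,
        mul_assoc]
    have hne : L.winner (Beats (hardP n)) ≠ R.winner (Beats (hardP n)) := fun he =>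
      (List.nodup_append.1 hT.1).2.2 _ (BT.winner_mem_leaves L) _
        (he ▸ BT.winner_mem_leaves R) rfl
    unfold BT.winner at hwin
    split_ifs at hwin with h
    · exact key hT hwin (hwin ▸ h)
    · rw [wd_node_comm]
      exact key (isBlock_node_comm.1 hT) hwin
        (hwin ▸ (isTournament_beats_hardP _ _ hne.symm).2 h)

end HardTournament

/-- in the hard `n`-round tournament, every draw in which player 1
(index 0) surely wins satisfies
`wp_ε(1,P,σ) ≤ 1 - (N-1)ε + ε² Q(ε)` for all `ε ∈ (0,1)`, for some real polynomial `Q`. -/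
theorem hard_tournament_nonrobust (n : ℕ)
    (σ : BT (Fin (2 ^ n)) n) (hσ : IsDraw σ)
    (hwin : wd (hardP n) σ ⟨0, by positivity⟩ = 1) :
    ∃ Q : Polynomial ℝ, ∀ ε ∈ Set.Ioo (0 : ℝ) 1,
      wpe ⟨0, by positivity⟩ (hardP n) ε σ ≤
        1 - ((2 : ℝ) ^ n - 1) * ε + ε ^ 2 * Q.eval ε := by
  have hnd : σ.leaves.Nodup := List.nodup_iff_count_le_one.2 fun i => (hσ i).le
  have hblock : IsBlock σ 0 := ⟨hnd, fun x _ => ⟨Nat.zero_le _, by simp⟩⟩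
  have hchamp : σ.winner (Beats (hardP n)) = ⟨0, by positivity⟩ := by
    have h := wd_eq_ite_winner hardP_isCompMatrix hardP_isDet σ hnd ⟨0, by positivity⟩
    rw [hwin] at h
    split_ifs at h with h'
    · exact h'.symm
    · norm_num at h
  obtain ⟨Q, hQ⟩ := exists_one_sub_pow_eq (2 ^ n - 1)
  refine ⟨Q, fun ε hε => ?_⟩
  calc wpe _ (hardP n) ε σ ≤ wd (hardPε n ε) σ ⟨0, by positivity⟩ :=
        wpe_le_wd (hardPε_mem_perturbs hε.1.le hε.2.le) hnd _
    _ = (1 - ε) ^ (2 ^ n - 1) := hblock.wd_hardPε_eq ε (dvd_zero _) hchamp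
    _ = 1 - ((2 : ℝ) ^ n - 1) * ε + ε ^ 2 * Q.eval ε := by
        rw [hQ, Nat.cast_sub Nat.one_le_two_pow]
        push_cast
        ring
end

section
/- Define polynomials p_k ∈ ℝ[ε] by p_1(ε) = 1 − ε and p_{k+1}(ε) = p_k(ε)·( p_k(ε)·(1−ε) + (1 − p_k(ε))·ε ). Then for every n ≥ 1: the degree of p_n equals 2^n − 1, p_n(0) = 1, and the coefficient of the linear term of p_n equals −(2^n − 1); equivalently, p_n(ε) = 1 − (2^n − 1)ε + ε²·Q(ε) for some polynomial Q. -/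
open Polynomial

/-- `p_k ↦ p_{k+1}`: the next opponent is the original winner of the neighbouring
subtournament with probability `q` too; that match is won with probability `1 - ε`,
any other with probability `ε`. -/
noncomputable def roundStep {R : Type*} [CommRing R] (q : R[X]) : R[X] :=
  q * (q * (1 - X) + (1 - q) * X)

section roundStep

variable {R : Type*} [CommRing R]

theorem coeff_zero_roundStep (q : R[X]) : (roundStep q).coeff 0 = q.coeff 0 ^ 2 := by
  simp [roundStep, mul_coeff_zero, sq]

theorem coeff_one_roundStep (q : R[X]) :
    (roundStep q).coeff 1 = q.coeff 0 * (2 * q.coeff 1 + 1 - 2 * q.coeff 0) := by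
  simp only [roundStep, mul_coeff_one, mul_coeff_zero, coeff_add, coeff_sub, coeff_one,
    coeff_X_zero, coeff_X_one, one_ne_zero, ↓reduceIte]
  ring

/-- The term `-2qε` of the second factor dominates, so degrees go `d ↦ 2d + 1`. -/
theorem natDegree_roundStep [IsDomain R] (h2 : (2 : R) ≠ 0) {q : R[X]} (hq : 1 ≤ q.natDegree) :
    (roundStep q).natDegree = 2 * q.natDegree + 1 := by
  have hq0 : q ≠ 0 := by rintro rfl; simp at hq
  have h2q0 : 2 * q ≠ 0 := by
    rw [← C_ofNat]
    exact mul_ne_zero (C_ne_zero.mpr h2) hq0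
  have hdeg2q : (2 * q).natDegree = q.natDegree := by
    rw [← C_ofNat, natDegree_C_mul h2]
  have hfactor : q * (1 - X) + (1 - q) * X = q + X - 2 * q * X := by ring
  have hdegFactor : (q + X - 2 * q * X).natDegree = q.natDegree + 1 := by
    have hlow : (q + X).natDegree ≤ q.natDegree :=
      (natDegree_add_le _ _).trans (max_le le_rfl (natDegree_X_le.trans hq))
    rw [natDegree_sub_eq_right_of_natDegree_lt] <;> rw [natDegree_mul_X h2q0, hdeg2q]
    omega
  have hfactor0 : q + X - 2 * q * X ≠ 0 := by
    intro h
    simp [h] at hdegFactor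
  rw [roundStep, hfactor, natDegree_mul hq0 hfactor0, hdegFactor]
  ring

end roundStep

/-- the polynomials `p_1 = 1 - ε`,
`p_{k+1} = p_k (p_k (1-ε) + (1-p_k) ε)` satisfy, for all `n ≥ 1`:
`deg p_n = 2^n - 1`, `p_n(0) = 1`, and the linear coefficient is `-(2^n - 1)`. -/
theorem hard_recurrence_coeffs (p : ℕ → Polynomial ℝ)
    (h1 : p 1 = 1 - Polynomial.X)
    (hrec : ∀ k, 1 ≤ k → p (k + 1) =
      p k * (p k * (1 - Polynomial.X) + (1 - p k) * Polynomial.X))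
    (n : ℕ) (hn : 1 ≤ n) :
    (p n).natDegree = 2 ^ n - 1 ∧ (p n).coeff 0 = 1 ∧
      (p n).coeff 1 = -((2 : ℝ) ^ n - 1) := by
  induction n, hn using Nat.le_induction with
  | base =>
    rw [h1]
    refine ⟨by compute_degree!, by simp, by norm_num [coeff_one]⟩
  | succ k hk ih =>
    obtain ⟨hdeg, hc0, hc1⟩ := ih
    have hstep : p (k + 1) = roundStep (p k) := hrec k hk
    have hpow : 2 ≤ 2 ^ k := Nat.le_self_pow (by omega) 2
    rw [hstep, natDegree_roundStep two_ne_zero (by omega), coeff_zero_roundStep,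
      coeff_one_roundStep, hdeg, hc0, hc1, pow_succ, pow_succ]
    refine ⟨by omega, by norm_num, by ring⟩
end

section
/- Fix n ≥ 1 and p ∈ (1/2, 1), and consider a big-vs-small tournament on N = 2^n players with big-beats-small probability p (entries between two big or between two small players arbitrary). Define e_1 = p and e_{k+1} = e_k² + 2p·e_k·(1 − e_k). Then for every draw σ, the probability that a big player wins, b(P,σ) = Σ_{i ∈ B} wp(i,P,σ), satisfies b(P,σ) ≤ e_n, and equality holds if and only if σ is a mixed draw. In particular, the draws maximizing the probability of a big player winning are precisely the mixed draws. -/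
/-! With `s x = p + (1 - 2p) x` and `κ = p (1 - p)`, the big-vs-small structure makes the total
winning probability of the big players combine as `b = f_p(b_L, b_R)` at every node, and
`s (f_p x y) = κ + s x * s y`. So `s b` is the tree evaluated with `x ⋆ y = κ + x y` from
leaves `1 - p` (big) and `p` (small), and since `s` is decreasing, maximizing `b` means minimizing
this product. For `c` big leaves among `2 ^ h`, the minimum is attained by splitting `c` as evenly
as possible at every node, because these minimal values are strictly log-convex in `c`. With
`2 ^ (n-1)` big players an uneven split anywhere loses strictly, so equality forces every
first-round match to be big against small, and the balanced value is `s e_n`. -/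

def StrictConvexUpTo (u : ℕ → ℝ) (N : ℕ) : Prop :=
  ∀ c, c + 2 ≤ N → u (c + 1) - u c < u (c + 2) - u (c + 1)

namespace StrictConvexUpTo

variable {u : ℕ → ℝ} {N : ℕ}

theorem sub_lt_sub_of_lt (hu : StrictConvexUpTo u N) {a b : ℕ} (hab : a < b) (hb : b + 1 ≤ N) :
    u (a + 1) - u a < u (b + 1) - u b := by
  induction b, hab using Nat.le_induction with
  | base => exact hu a hb
  | succ b hab ih => exact (ih (by omega)).trans (hu b hb)

theorem add_lt_add_inner (hu : StrictConvexUpTo u N) {a b : ℕ} (hab : a + 2 ≤ b) (hb : b ≤ N) :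
    u (a + 1) + u (b - 1) < u a + u b := by
  have := hu.sub_lt_sub_of_lt (a := a) (b := b - 1) (by omega) (by omega)
  rw [Nat.sub_add_cancel (by omega)] at this
  linarith

theorem mid_add_mid_le (hu : StrictConvexUpTo u N) {a b : ℕ} (hab : a ≤ b) (hb : b ≤ N) :
    u ((a + b) / 2) + u ((a + b + 1) / 2) ≤ u a + u b := by
  obtain ⟨k, rfl⟩ := Nat.exists_eq_add_of_le hab
  induction k using Nat.strong_induction_on generalizing a with
  | _ k ih =>
    rcases Nat.lt_or_ge k 2 with hk | hk
    · rw [show (a + (a + k)) / 2 = a by omega, show (a + (a + k) + 1) / 2 = a + k by omega]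
    · have hinner := hu.add_lt_add_inner (a := a) (b := a + k) (by omega) hb
      have hmid := ih (k - 2) (by omega) (a := a + 1) (by omega) (by omega)
      rw [show a + 1 + (a + 1 + (k - 2)) = a + (a + k) by omega,
        show a + 1 + (k - 2) = a + k - 1 by omega] at hmid
      linarith

theorem mid_add_mid_lt (hu : StrictConvexUpTo u N) {a b : ℕ} (hab : a + 2 ≤ b) (hb : b ≤ N) :
    u ((a + b) / 2) + u ((a + b + 1) / 2) < u a + u b := by
  have hmid := hu.mid_add_mid_le (a := a + 1) (b := b - 1) (by omega) (by omega)
  rw [show a + 1 + (b - 1) = a + b by omega] at hmid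
  linarith [hu.add_lt_add_inner hab hb]

end StrictConvexUpTo

/-- The `κ`-product value of the depth-`h` tree carrying `c` leaves `v` (the others `u`),
split as evenly as possible at every node. -/
noncomputable def balancedEval (κ u v : ℝ) : ℕ → ℕ → ℝ
  | 0, c => if c = 0 then u else v
  | h + 1, c => κ + balancedEval κ u v h ((c + 1) / 2) * balancedEval κ u v h (c / 2)

section balancedEval

variable {κ u v : ℝ}

local notation "M" => balancedEval κ u v

theorem balancedEval_two_mul (h c : ℕ) : M (h + 1) (2 * c) = κ + M h c ^ 2 := by
  rw [balancedEval, show (2 * c + 1) / 2 = c by omega, show 2 * c / 2 = c by omega, sq]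

theorem balancedEval_two_mul_add_one (h c : ℕ) :
    M (h + 1) (2 * c + 1) = κ + M h (c + 1) * M h c := by
  rw [balancedEval, show (2 * c + 1 + 1) / 2 = c + 1 by omega, show (2 * c + 1) / 2 = c by omega]

theorem balancedEval_pos (hκ : 0 ≤ κ) (hu : 0 < u) (hv : 0 < v) : ∀ h c, 0 < M h c
  | 0, c => by unfold balancedEval; split <;> assumption
  | h + 1, c => by
    rw [balancedEval]
    have := balancedEval_pos hκ hu hv h ((c + 1) / 2)
    have := balancedEval_pos hκ hu hv h (c / 2)
    positivity

theorem balancedEval_succ_lt (hκ : 0 ≤ κ) (hv : 0 < v) (hvu : v < u) :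
    ∀ h c, c + 1 ≤ 2 ^ h → M h (c + 1) < M h c
  | 0, c, hc => by
    obtain rfl : c = 0 := by simpa using hc
    simpa [balancedEval] using hvu
  | h + 1, c, hc => by
    have hpos := balancedEval_pos hκ (hv.trans hvu) hv h
    obtain ⟨d, rfl | rfl⟩ := Nat.even_or_odd' c
    · have := balancedEval_succ_lt hκ hv hvu h d (by rw [pow_succ] at hc; omega)
      rw [balancedEval_two_mul_add_one, balancedEval_two_mul, sq]
      gcongr
      exact hpos d
    · have := balancedEval_succ_lt hκ hv hvu h d (by rw [pow_succ] at hc; omega)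
      rw [show 2 * d + 1 + 1 = 2 * (d + 1) by ring, balancedEval_two_mul_add_one,
        balancedEval_two_mul, sq]
      gcongr
      exact hpos (d + 1)

theorem balancedEval_sq_lt (hκ : 0 < κ) (hv : 0 < v) (hvu : v < u) :
    ∀ h c, c + 2 ≤ 2 ^ h → M h (c + 1) ^ 2 < M h c * M h (c + 2)
  | 0, c, hc => by simp at hc
  | h + 1, c, hc => by
    have hpos := balancedEval_pos hκ.le (hv.trans hvu) hv h
    have hdec := balancedEval_succ_lt hκ.le hv hvu h
    rw [pow_succ] at hc
    obtain ⟨d, rfl | rfl⟩ := Nat.even_or_odd' c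
    · -- `(κ + x²)(κ + y²) - (κ + x y)² = κ (x - y)²`
      have hxy := hdec d (by omega)
      rw [balancedEval_two_mul_add_one, show 2 * d + 2 = 2 * (d + 1) by ring,
        balancedEval_two_mul, balancedEval_two_mul]
      nlinarith [mul_pos hκ (pow_pos (sub_pos.2 hxy) 2)]
    · have hlog := balancedEval_sq_lt hκ hv hvu h d (by omega)
      have hy := hpos (d + 1)
      rw [show 2 * d + 1 + 1 = 2 * (d + 1) by ring, show 2 * d + 1 + 2 = 2 * (d + 1) + 1 by ring,
        balancedEval_two_mul, balancedEval_two_mul_add_one, balancedEval_two_mul_add_one,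
        show d + 1 + 1 = d + 2 by ring]
      have hmid : 2 * M h (d + 1) < M h d + M h (d + 2) := by
        nlinarith [sq_nonneg (M h d - M h (d + 2)), hpos d, hpos (d + 2)]
      nlinarith [mul_pos (mul_pos hκ hy) (sub_pos.2 hmid), mul_pos (pow_pos hy 2) (sub_pos.2 hlog)]

theorem strictConvexUpTo_log_balancedEval (hκ : 0 < κ) (hv : 0 < v) (hvu : v < u) (h : ℕ) :
    StrictConvexUpTo (fun c => Real.log (M h c)) (2 ^ h) := by
  intro c hc
  have hpos := balancedEval_pos hκ.le (hv.trans hvu) hv h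
  have := Real.log_lt_log (pow_pos (hpos _) 2) (balancedEval_sq_lt hκ hv hvu h c hc)
  rw [Real.log_pow, Real.log_mul (hpos c).ne' (hpos (c + 2)).ne'] at this
  push_cast at this
  linarith

theorem balancedEval_succ_le (hκ : 0 < κ) (hv : 0 < v) (hvu : v < u) {h a b : ℕ}
    (ha : a ≤ 2 ^ h) (hb : b ≤ 2 ^ h) : M (h + 1) (a + b) ≤ κ + M h a * M h b := by
  wlog hab : a ≤ b generalizing a b
  · rw [Nat.add_comm a b, mul_comm (M h a)]
    exact this hb ha (le_of_not_ge hab)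
  have hpos := balancedEval_pos hκ.le (hv.trans hvu) hv h
  have hlog := (strictConvexUpTo_log_balancedEval hκ hv hvu h).mid_add_mid_le hab hb
  rw [← Real.log_mul (hpos _).ne' (hpos _).ne', ← Real.log_mul (hpos _).ne' (hpos _).ne',
    Real.log_le_log_iff (mul_pos (hpos _) (hpos _)) (mul_pos (hpos _) (hpos _))] at hlog
  rw [balancedEval, mul_comm]
  linarith

theorem balancedEval_two_mul_lt (hκ : 0 < κ) (hv : 0 < v) (hvu : v < u) {h a b c : ℕ}
    (habc : a + b = 2 * c) (hac : a ≠ c) (ha : a ≤ 2 ^ h) (hb : b ≤ 2 ^ h) :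
    M (h + 1) (2 * c) < κ + M h a * M h b := by
  wlog hab : a ≤ b generalizing a b
  · rw [mul_comm (M h a)]
    exact this (by omega) (by omega) hb ha (by omega)
  have hpos := balancedEval_pos hκ.le (hv.trans hvu) hv h
  have hlog := (strictConvexUpTo_log_balancedEval hκ hv hvu h).mid_add_mid_lt
    (a := a) (b := b) (by omega) hb
  rw [← Real.log_mul (hpos _).ne' (hpos _).ne', ← Real.log_mul (hpos _).ne' (hpos _).ne',
    Real.log_lt_log_iff (mul_pos (hpos _) (hpos _)) (mul_pos (hpos _) (hpos _)),
    show (a + b) / 2 = c by omega, show (a + b + 1) / 2 = c by omega, ← sq] at hlog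
  rw [balancedEval_two_mul]
  linarith

end balancedEval

theorem BT.length_leaves_s5 {α : Type} : ∀ {n : ℕ} (t : BT α n), t.leaves.length = 2 ^ n
  | _, .leaf _ => rfl
  | _, .node L R => by simp [BT.leaves, L.length_leaves_s5, R.length_leaves_s5, pow_succ, mul_two]

theorem BT.countP_leaves_le {α : Type} (p : α → Bool) {n : ℕ} (t : BT α n) :
    t.leaves.countP p ≤ 2 ^ n :=
  t.length_leaves_s5 ▸ List.countP_le_length

noncomputable def kappaEval {α : Type} (κ : ℝ) (w : α → ℝ) : ∀ {n : ℕ}, BT α n → ℝ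
  | _, .leaf a => w a
  | _, .node L R => κ + kappaEval κ w L * kappaEval κ w R

section kappaEval

variable {α : Type} [DecidableEq α] {κ u v : ℝ}

local notation "M" => balancedEval κ u v

theorem balancedEval_le_kappaEval (hκ : 0 < κ) (hv : 0 < v) (hvu : v < u) (B : Finset α) :
    ∀ {h : ℕ} (t : BT α h),
      M h (t.leaves.countP (· ∈ B)) ≤ kappaEval κ (fun i => if i ∈ B then v else u) t
  | _, .leaf a => by by_cases ha : a ∈ B <;> simp [ha, BT.leaves, kappaEval, balancedEval]
  | h + 1, .node L R => by
    have hpos := balancedEval_pos hκ.le (hv.trans hvu) hv h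
    have hL := balancedEval_le_kappaEval hκ hv hvu B L
    have hR := balancedEval_le_kappaEval hκ hv hvu B R
    have hbal := balancedEval_succ_le hκ hv hvu (L.countP_leaves_le (· ∈ B))
      (R.countP_leaves_le (· ∈ B))
    simp only [BT.leaves, List.countP_append, kappaEval]
    calc _ ≤ _ := hbal
      _ ≤ _ := by gcongr; exacts [(hpos _).le, (hpos _).le.trans hL]

end kappaEval

theorem pairList_append {α : Type} :
    ∀ l₁ l₂ : List α, Even l₁.length → pairList (l₁ ++ l₂) = pairList l₁ ++ pairList l₂
  | [], _, _ => rfl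
  | [_], _, h => by simp at h
  | _ :: _ :: l₁, l₂, h => by
    simp [pairList, pairList_append l₁ l₂ (by simpa [Nat.even_add_one] using h)]

section MixedDraw

variable {N : ℕ} {B : Finset (Fin N)}

theorem mixedDraw_leaf_leaf_iff {a b : Fin N} :
    MixedDraw B (.node (.leaf a) (.leaf b)) ↔ (a ∈ B ↔ b ∉ B) := by
  simp [MixedDraw, firstPairs, BT.leaves, pairList]

theorem mixedDraw_node_iff {m : ℕ} {L R : BT (Fin N) (m + 1)} :
    MixedDraw B (.node L R) ↔ MixedDraw B L ∧ MixedDraw B R := by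
  have hL : Even L.leaves.length := by simp [L.length_leaves_s5, Nat.even_pow]
  simp only [MixedDraw, firstPairs, BT.leaves, pairList_append _ _ hL, List.mem_append, or_imp,
    forall_and]

theorem MixedDraw.countP_eq : ∀ {m : ℕ} {t : BT (Fin N) (m + 1)},
    MixedDraw B t → t.leaves.countP (· ∈ B) = 2 ^ m
  | 0, .node (.leaf a) (.leaf b), hmix => by
    rw [mixedDraw_leaf_leaf_iff] at hmix
    by_cases ha : a ∈ B <;> simp_all [BT.leaves]
  | _ + 1, .node _ _, hmix => by
    obtain ⟨hL, hR⟩ := mixedDraw_node_iff.1 hmix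
    simp [BT.leaves, List.countP_append, hL.countP_eq, hR.countP_eq, pow_succ, mul_two]

end MixedDraw

theorem kappaEval_eq_balancedEval_iff {κ u v : ℝ} (hκ : 0 < κ) (hv : 0 < v) (hvu : v < u) {N : ℕ}
    (B : Finset (Fin N)) : ∀ {m : ℕ} (t : BT (Fin N) (m + 1)), t.leaves.countP (· ∈ B) = 2 ^ m →
      (kappaEval κ (fun i => if i ∈ B then v else u) t = balancedEval κ u v (m + 1) (2 ^ m) ↔
        MixedDraw B t)
  | 0, .node (.leaf a) (.leaf b), hcount => by
    rw [mixedDraw_leaf_leaf_iff]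
    by_cases ha : a ∈ B <;> by_cases hb : b ∈ B <;>
      simp_all [BT.leaves, kappaEval, balancedEval, mul_comm]
  | m + 1, .node L R, hcount => by
    have hpos := balancedEval_pos hκ.le (hv.trans hvu) hv (m + 1)
    have hL := balancedEval_le_kappaEval hκ hv hvu B L
    have hR := balancedEval_le_kappaEval hκ hv hvu B R
    simp only [BT.leaves, List.countP_append, pow_succ'] at hcount
    rw [kappaEval, pow_succ', mixedDraw_node_iff]
    by_cases hbal : L.leaves.countP (· ∈ B) = 2 ^ m
    · rw [hbal] at hL
      rw [show R.leaves.countP (· ∈ B) = 2 ^ m by omega] at hR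
      rw [← kappaEval_eq_balancedEval_iff hκ hv hvu B L hbal,
        ← kappaEval_eq_balancedEval_iff hκ hv hvu B R (by omega), balancedEval_two_mul,
        add_right_inj, sq, eq_comm,
        mul_eq_mul_iff_eq_and_eq_of_pos hL hR (hpos _) ((hpos _).trans_le hR), eq_comm,
        @eq_comm _ (balancedEval κ u v _ _)]
    · refine iff_of_false (ne_of_gt ?_) fun hmix => hbal hmix.1.countP_eq
      calc _ < κ + balancedEval κ u v (m + 1) (L.leaves.countP (· ∈ B)) *
              balancedEval κ u v (m + 1) (R.leaves.countP (· ∈ B)) :=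
            balancedEval_two_mul_lt hκ hv hvu hcount hbal (L.countP_leaves_le _)
              (R.countP_leaves_le _)
        _ ≤ _ := by gcongr; exacts [(hpos _).le, (hpos _).le.trans hL]

section Tournament

variable {N : ℕ} {P : Fin N → Fin N → ℝ}

theorem wd_eq_zero_of_not_mem :
    ∀ {m : ℕ} {t : BT (Fin N) m} {i : Fin N}, i ∉ t.leaves → wd P t i = 0
  | _, .leaf _, _, h => by simp_all [BT.leaves, wd]
  | _, .node _ _, _, h => by
    simp only [BT.leaves, List.mem_append, not_or] at h
    simp [wd, wd_eq_zero_of_not_mem h.1, wd_eq_zero_of_not_mem h.2]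

theorem sum_wd_mul_add_sum_wd_mul (hP : IsCompMatrix P) {m : ℕ} {L R : BT (Fin N) m}
    (hdisj : L.leaves.Disjoint R.leaves) (s : Finset (Fin N)) :
    ∑ i ∈ s, wd P L i * ∑ j ∈ s, wd P R j * P i j + ∑ i ∈ s, wd P R i * ∑ j ∈ s, wd P L j * P i j =
      (∑ i ∈ s, wd P L i) * ∑ j ∈ s, wd P R j := by
  have hpair : ∀ i j, wd P L i * wd P R j * (P i j + P j i) = wd P L i * wd P R j := by
    intro i j
    by_cases hij : i = j
    · subst hij
      by_cases hi : i ∈ L.leaves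
      · simp [wd_eq_zero_of_not_mem (hdisj hi)]
      · simp [wd_eq_zero_of_not_mem hi]
    · rw [(hP i j hij).2.2, mul_one]
  rw [Finset.sum_mul_sum]
  simp only [Finset.mul_sum]
  rw [Finset.sum_comm (f := fun (i j : Fin N) => wd P R i * (wd P L j * P i j)),
    ← Finset.sum_add_distrib]
  refine Finset.sum_congr rfl fun i _ => ?_
  rw [← Finset.sum_add_distrib]
  refine Finset.sum_congr rfl fun j _ => ?_
  rw [← hpair]
  ring

theorem sum_wd_eq_one (hP : IsCompMatrix P) :
    ∀ {m : ℕ} (t : BT (Fin N) m), t.leaves.Nodup → ∑ i, wd P t i = 1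
  | _, .leaf _, _ => by simp [wd]
  | _, .node L R, hnd => by
    obtain ⟨hL, hR, hdisj⟩ := List.nodup_append'.1 hnd
    simp only [wd, Finset.sum_add_distrib]
    rw [sum_wd_mul_add_sum_wd_mul hP hdisj, sum_wd_eq_one hP L hL, sum_wd_eq_one hP R hR, one_mul]

variable {B : Finset (Fin N)} {p : ℝ}

theorem sum_wd_mul_eq_of_mem (hP : IsCompMatrix P) (hbs : ∀ b ∈ B, ∀ s, s ∉ B → P b s = p)
    {m : ℕ} {t : BT (Fin N) m} (ht : t.leaves.Nodup) {i : Fin N} (hi : i ∈ B) :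
    ∑ j, wd P t j * P i j = ∑ j ∈ B, wd P t j * P i j + p * (1 - ∑ j ∈ B, wd P t j) := by
  have hsmall : ∑ j ∈ Bᶜ, wd P t j = 1 - ∑ j ∈ B, wd P t j := by
    rw [← sum_wd_eq_one hP t ht, ← Finset.sum_add_sum_compl B]
    ring
  rw [← Finset.sum_add_sum_compl B, ← hsmall, Finset.mul_sum]
  congr 1
  refine Finset.sum_congr rfl fun j hj => ?_
  rw [hbs i hi j (Finset.mem_compl.1 hj), mul_comm]

theorem sum_wd_node_eq_fp (hP : IsCompMatrix P) (hbs : ∀ b ∈ B, ∀ s, s ∉ B → P b s = p)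
    {m : ℕ} {L R : BT (Fin N) m} (hnd : (BT.node L R).leaves.Nodup) :
    ∑ i ∈ B, wd P (.node L R) i = fp p (∑ i ∈ B, wd P L i) (∑ i ∈ B, wd P R i) := by
  obtain ⟨hL, hR, hdisj⟩ := List.nodup_append'.1 hnd
  calc ∑ i ∈ B, wd P (.node L R) i
      = ∑ i ∈ B, (wd P L i * (∑ j ∈ B, wd P R j * P i j + p * (1 - ∑ j ∈ B, wd P R j)) +
          wd P R i * (∑ j ∈ B, wd P L j * P i j + p * (1 - ∑ j ∈ B, wd P L j))) :=
        Finset.sum_congr rfl fun i hi => by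
          simp only [wd]
          rw [sum_wd_mul_eq_of_mem hP hbs hR hi, sum_wd_mul_eq_of_mem hP hbs hL hi]
    _ = (∑ i ∈ B, wd P L i * ∑ j ∈ B, wd P R j * P i j +
          ∑ i ∈ B, wd P R i * ∑ j ∈ B, wd P L j * P i j) +
          p * (∑ i ∈ B, wd P L i) * (1 - ∑ i ∈ B, wd P R i) +
          p * (∑ i ∈ B, wd P R i) * (1 - ∑ i ∈ B, wd P L i) := by
        simp only [mul_add, Finset.sum_add_distrib, ← Finset.sum_mul]
        ring
    _ = fp p (∑ i ∈ B, wd P L i) (∑ i ∈ B, wd P R i) := by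
        rw [sum_wd_mul_add_sum_wd_mul hP hdisj, fp]
        ring

theorem kappaEval_eq_sum_wd (hP : IsCompMatrix P) (hbs : ∀ b ∈ B, ∀ s, s ∉ B → P b s = p) :
    ∀ {m : ℕ} (t : BT (Fin N) m), t.leaves.Nodup →
      kappaEval (p * (1 - p)) (fun i => if i ∈ B then 1 - p else p) t =
        p + (1 - 2 * p) * ∑ i ∈ B, wd P t i
  | _, .leaf a, _ => by
    by_cases ha : a ∈ B
    · simp [ha, kappaEval, wd]
      ring
    · simp [ha, kappaEval, wd]
  | _, .node L R, hnd => by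
    obtain ⟨hL, hR, -⟩ := List.nodup_append'.1 hnd
    rw [kappaEval, kappaEval_eq_sum_wd hP hbs L hL, kappaEval_eq_sum_wd hP hbs R hR,
      sum_wd_node_eq_fp hP hbs hnd, fp]
    ring

end Tournament

theorem IsDraw.nodup {N n : ℕ} {σ : BT (Fin N) n} (hσ : IsDraw σ) : σ.leaves.Nodup :=
  List.nodup_iff_count_le_one.2 fun i => (hσ i).le

theorem IsDraw.countP_mem_eq_card {N n : ℕ} {σ : BT (Fin N) n} (hσ : IsDraw σ)
    (B : Finset (Fin N)) :
    σ.leaves.countP (· ∈ B) = B.card := by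
  have : (σ.leaves : Multiset (Fin N)) = Finset.univ.val := by
    ext i
    simp [hσ i]
  rw [← Multiset.coe_countP, this, Multiset.countP_eq_card_filter, ← Finset.filter_val]
  simp

theorem balancedEval_eq_of_rec {p : ℝ} {e : ℕ → ℝ} (he1 : e 1 = p)
    (herec : ∀ k, 1 ≤ k → e (k + 1) = e k ^ 2 + 2 * p * e k * (1 - e k)) :
    ∀ m, balancedEval (p * (1 - p)) p (1 - p) (m + 1) (2 ^ m) = p + (1 - 2 * p) * e (m + 1)
  | 0 => by
    simp [balancedEval, he1]
    ring
  | m + 1 => by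
    rw [pow_succ', balancedEval_two_mul, balancedEval_eq_of_rec he1 herec m,
      herec (m + 1) (by omega)]
    ring

/-- in a big-vs-small tournament on `2^n` players with big-beats-small
probability `p ∈ (1/2,1)`, with `e_1 = p`, `e_{k+1} = e_k² + 2p e_k (1-e_k)`,
every draw `σ` satisfies `b(P,σ) = Σ_{i∈B} wp(i,P,σ) ≤ e_n`, with equality iff `σ`
is a mixed draw. -/
theorem mixed_draws_optimal (n : ℕ) (hn : 1 ≤ n)
    (p : ℝ) (hp : p ∈ Set.Ioo (1 / 2 : ℝ) 1)
    (B : Finset (Fin (2 ^ n))) (hB : B.card = 2 ^ (n - 1))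
    (P : Fin (2 ^ n) → Fin (2 ^ n) → ℝ) (hP : IsCompMatrix P)
    (hbs : ∀ b ∈ B, ∀ s, s ∉ B → P b s = p)
    (e : ℕ → ℝ) (he1 : e 1 = p)
    (herec : ∀ k, 1 ≤ k → e (k + 1) = e k ^ 2 + 2 * p * e k * (1 - e k))
    (σ : BT (Fin (2 ^ n)) n) (hσ : IsDraw σ) :
    (∑ i ∈ B, wd P σ i) ≤ e n ∧
      ((∑ i ∈ B, wd P σ i) = e n ↔ MixedDraw B σ) := by
  obtain ⟨m, rfl⟩ : ∃ m, n = m + 1 := ⟨n - 1, by omega⟩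
  obtain ⟨hp1, hp2⟩ := hp
  have hκ : 0 < p * (1 - p) := mul_pos (by linarith) (by linarith)
  have hv : 0 < 1 - p := by linarith
  have hvu : 1 - p < p := by linarith
  have hneg : 1 - 2 * p < 0 := by linarith
  have hcount : σ.leaves.countP (· ∈ B) = 2 ^ m := by simpa [hB] using hσ.countP_mem_eq_card B
  have hsum := kappaEval_eq_sum_wd hP hbs σ hσ.nodup
  have he := balancedEval_eq_of_rec he1 herec m
  have hle := balancedEval_le_kappaEval hκ hv hvu B σ
  have hiff := kappaEval_eq_balancedEval_iff hκ hv hvu B σ hcount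
  rw [hcount, hsum, he] at hle
  rw [hsum, he] at hiff
  refine ⟨(mul_le_mul_left_of_neg hneg).1 (by linarith), ?_⟩
  rw [← hiff, add_right_inj, mul_right_inj' hneg.ne]
end

section
/- Let p ∈ (1/2, 1) and f_p(x,y) = p(x+y) + (1−2p)xy. For all reals a, b, c, d, f_p(f_p(a,d), f_p(b,c)) − f_p(f_p(a,b), f_p(c,d)) = p(2p−1)(1−p)(a−c)(b−d). Consequently, if a ≥ b ≥ c ≥ d and either b > c, or both a > b and c > d, then f_p(f_p(a,d), f_p(b,c)) > f_p(f_p(a,b), f_p(c,d)). -/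
/-- the reorder identity and its consequence. -/
theorem reorder_identity (p : ℝ) (hp : p ∈ Set.Ioo (1 / 2 : ℝ) 1) (a b c d : ℝ) :
    fp p (fp p a d) (fp p b c) - fp p (fp p a b) (fp p c d) =
      p * (2 * p - 1) * (1 - p) * (a - c) * (b - d) ∧
    (a ≥ b → b ≥ c → c ≥ d → (b > c ∨ (a > b ∧ c > d)) →
      fp p (fp p a d) (fp p b c) > fp p (fp p a b) (fp p c d)) := by
  obtain ⟨hp1, hp2⟩ := hp
  have hid : fp p (fp p a d) (fp p b c) - fp p (fp p a b) (fp p c d) =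
      p * (2 * p - 1) * (1 - p) * (a - c) * (b - d) := by
    simp only [fp]; ring
  refine ⟨hid, fun hab hbc hcd h => ?_⟩
  have hac : a - c > 0 := by rcases h with h | ⟨h, _⟩ <;> linarith
  have hbd : b - d > 0 := by rcases h with h | ⟨_, h⟩ <;> linarith
  have : p * (2 * p - 1) * (1 - p) * (a - c) * (b - d) > 0 := by
    have h1 : (0:ℝ) < p := by linarith
    have h2 : (0:ℝ) < 2 * p - 1 := by linarith
    have h3 : (0:ℝ) < 1 - p := by linarith
    positivity
  linarith [hid]
end

section
/- Let p ∈ (1/2, 1), n ≥ 1, and 0 ≤ k ≤ 2^n. Any two ordered perfect binary trees of depth n with leaf labels in {0,1} and exactly k leaves labeled 1 that both maximize B_p (among all such trees with exactly k ones) are isomorphic, i.e. one can be obtained from the other by a sequence of swaps of the two children subtrees at internal nodes. In other words, up to isomorphism there is a unique way to arrange k ones in a big-optimal draw. -/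
namespace BigOpt

/-! ### Tree basics -/

theorem leaves_length {α : Type} : ∀ {n : ℕ} (t : BT α n), t.leaves.length = 2 ^ n
  | 0, .leaf _ => rfl
  | n + 1, .node L R => by
    simp [BT.leaves, leaves_length L, leaves_length R, pow_succ]
    ring

theorem zeroOne_node {n : ℕ} {L R : BT ℝ n} (h : ZeroOne (.node L R)) :
    ZeroOne L ∧ ZeroOne R := by
  constructor <;> intro x hx <;> apply h x <;> simp [BT.leaves] <;> tauto

theorem ones_node {n : ℕ} (L R : BT ℝ n) : ones (BT.node L R) = ones L + ones R := by
  simp [ones, BT.leaves, List.count_append]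

theorem ones_le {n : ℕ} (t : BT ℝ n) : ones t ≤ 2 ^ n := by
  have := List.count_le_length (a := (1:ℝ)) (l := t.leaves)
  rwa [leaves_length t] at this

/-! ### The canonical tree -/

def canonT : (n : ℕ) → ℕ → BT ℝ n
  | 0, k => .leaf (if k = 0 then 0 else 1)
  | n + 1, k => .node (canonT n ((k + 1) / 2)) (canonT n (k / 2))

theorem canonT_zeroOne : ∀ (n k : ℕ), ZeroOne (canonT n k)
  | 0, k => by
    intro x hx
    simp [canonT, BT.leaves] at hx
    split at hx <;> simp [hx]
  | n + 1, k => by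
    intro x hx
    simp [canonT, BT.leaves] at hx
    rcases hx with hx | hx
    · exact canonT_zeroOne n ((k+1)/2) x hx
    · exact canonT_zeroOne n (k/2) x hx

theorem canonT_ones : ∀ (n k : ℕ), k ≤ 2 ^ n → ones (canonT n k) = k
  | 0, k, hk => by
    interval_cases k <;> simp [canonT, ones, BT.leaves]
  | n + 1, k, hk => by
    have h2 : 2 ^ (n + 1) = 2 * 2 ^ n := by ring
    rw [h2] at hk
    have h1 : (k + 1) / 2 ≤ 2 ^ n := by omega
    have h0 : k / 2 ≤ 2 ^ n := by omega
    rw [canonT, ones_node, canonT_ones n _ h1, canonT_ones n _ h0]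
    omega

noncomputable def Mv (p : ℝ) (n k : ℕ) : ℝ := Bp p (canonT n k)

noncomputable def Phi (p : ℝ) (n k : ℕ) : ℝ := p + (1 - 2 * p) * Mv p n k

/-! ### fp basics -/

theorem fp_comm (p x y : ℝ) : fp p x y = fp p y x := by unfold fp; ring

theorem fp_mem {p x y : ℝ} (hp1 : 1/2 < p) (hp2 : p < 1)
    (hx0 : 0 ≤ x) (hx1 : x ≤ 1) (hy0 : 0 ≤ y) (hy1 : y ≤ 1) :
    0 ≤ fp p x y ∧ fp p x y ≤ 1 := by
  unfold fp
  constructor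
  · nlinarith [mul_nonneg (mul_nonneg (by linarith : (0:ℝ) ≤ p) hx0) (by linarith : (0:ℝ) ≤ 1 - y),
      mul_nonneg (mul_nonneg (by linarith : (0:ℝ) ≤ p) hy0) (by linarith : (0:ℝ) ≤ 1 - x),
      mul_nonneg hx0 hy0]
  · nlinarith [mul_nonneg (mul_nonneg (by linarith : (0:ℝ) ≤ 1 - p) (by linarith : (0:ℝ) ≤ 1 - x)) hy0,
      mul_nonneg (mul_nonneg (by linarith : (0:ℝ) ≤ 1 - p) (by linarith : (0:ℝ) ≤ 1 - y)) hx0,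
      mul_nonneg (by linarith : (0:ℝ) ≤ 1 - x) (by linarith : (0:ℝ) ≤ 1 - y)]

theorem fp_mono_left {p x x' y : ℝ} (hp1 : 1/2 < p) (hp2 : p < 1)
    (hxx : x ≤ x') (hy0 : 0 ≤ y) (hy1 : y ≤ 1) : fp p x y ≤ fp p x' y := by
  unfold fp
  nlinarith [mul_nonneg (sub_nonneg.2 hxx) (show (0:ℝ) ≤ p + (1 - 2*p) * y by nlinarith)]

theorem fp_strict_left {p x x' y : ℝ} (hp1 : 1/2 < p) (hp2 : p < 1)
    (hxx : x < x') (hy0 : 0 ≤ y) (hy1 : y ≤ 1) : fp p x y < fp p x' y := by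
  unfold fp
  nlinarith [mul_pos (sub_pos.2 hxx) (show (0:ℝ) < p + (1 - 2*p) * y by nlinarith)]

theorem Bp_mem {p : ℝ} (hp1 : 1/2 < p) (hp2 : p < 1) :
    ∀ {n : ℕ} (t : BT ℝ n), ZeroOne t → 0 ≤ Bp p t ∧ Bp p t ≤ 1
  | 0, .leaf x, h => by
    rcases h x (by simp [BT.leaves]) with rfl | rfl <;> norm_num [Bp]
  | n + 1, .node L R, h => by
    obtain ⟨hL, hR⟩ := zeroOne_node h
    obtain ⟨h1, h2⟩ := Bp_mem hp1 hp2 L hL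
    obtain ⟨h3, h4⟩ := Bp_mem hp1 hp2 R hR
    exact fp_mem hp1 hp2 h1 h2 h3 h4

theorem Mv_mem {p : ℝ} (hp1 : 1/2 < p) (hp2 : p < 1) (n k : ℕ) :
    0 ≤ Mv p n k ∧ Mv p n k ≤ 1 :=
  Bp_mem hp1 hp2 _ (canonT_zeroOne n k)

theorem Phi_bounds {p : ℝ} (hp1 : 1/2 < p) (hp2 : p < 1) (n k : ℕ) :
    1 - p ≤ Phi p n k ∧ Phi p n k ≤ p := by
  obtain ⟨h0, h1⟩ := Mv_mem hp1 hp2 n k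
  unfold Phi
  constructor <;> nlinarith

theorem Phi_pos {p : ℝ} (hp1 : 1/2 < p) (hp2 : p < 1) (n k : ℕ) : 0 < Phi p n k := by
  have := (Phi_bounds hp1 hp2 n k).1; linarith

theorem Mv_succ (p : ℝ) (n k : ℕ) :
    Mv p (n + 1) k = fp p (Mv p n ((k + 1) / 2)) (Mv p n (k / 2)) := rfl

theorem Phi_fp (p x y : ℝ) :
    p + (1 - 2 * p) * fp p x y
      = (p + (1 - 2 * p) * x) * (p + (1 - 2 * p) * y) + p * (1 - p) := by
  unfold fp; ring

theorem Phi_succ (p : ℝ) (n k : ℕ) :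
    Phi p (n + 1) k = Phi p n ((k + 1) / 2) * Phi p n (k / 2) + p * (1 - p) := by
  unfold Phi
  rw [Mv_succ, Phi_fp]

/-! ### The key invariant: Phi is strictly decreasing and strictly log-convex -/

theorem Phi_inv {p : ℝ} (hp1 : 1/2 < p) (hp2 : p < 1) :
    ∀ n : ℕ,
      (∀ k : ℕ, k + 1 ≤ 2 ^ n → Phi p n (k + 1) < Phi p n k) ∧
      (∀ k : ℕ, 1 ≤ k → k + 1 ≤ 2 ^ n →
        (Phi p n k) ^ 2 < Phi p n (k - 1) * Phi p n (k + 1))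
  | 0 => by
    constructor
    · intro k hk
      have hk0 : k = 0 := by simpa using hk
      subst hk0
      have h0 : Mv p 0 0 = 0 := by simp [Mv, canonT, Bp]
      have h1 : Mv p 0 1 = 1 := by simp [Mv, canonT, Bp]
      unfold Phi
      rw [h0, h1]
      linarith
    · intro k hk1 hk2
      norm_num at hk2
      omega
  | n + 1 => by
    obtain ⟨hdec, hlog⟩ := Phi_inv hp1 hp2 n
    have hpow : 2 ^ (n + 1) = 2 * 2 ^ n := by ring
    have hc : 0 < p * (1 - p) := by nlinarith
    have hpos : ∀ k, 0 < Phi p n k := Phi_pos hp1 hp2 n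
    constructor
    · intro k hk
      rw [hpow] at hk
      rw [Phi_succ, Phi_succ]
      rcases Nat.even_or_odd k with ⟨j, hj⟩ | ⟨j, hj⟩
      · have e1 : (k + 1 + 1) / 2 = j + 1 := by omega
        have e2 : (k + 1) / 2 = j := by omega
        have e3 : k / 2 = j := by omega
        rw [e1, e2, e3]
        have hd := hdec j (by omega)
        nlinarith [hpos j]
      · have e1 : (k + 1 + 1) / 2 = j + 1 := by omega
        have e2 : (k + 1) / 2 = j + 1 := by omega
        have e3 : k / 2 = j := by omega
        rw [e1, e2, e3]
        have hd := hdec j (by omega)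
        nlinarith [hpos (j + 1)]
    · intro k hk1 hk
      rw [hpow] at hk
      rw [Phi_succ, Phi_succ, Phi_succ]
      rcases Nat.even_or_odd k with ⟨j, hj⟩ | ⟨j, hj⟩
      · -- k = 2 j with j ≥ 1
        have e1 : (k + 1) / 2 = j := by omega
        have e2 : k / 2 = j := by omega
        have e3 : (k - 1 + 1) / 2 = j := by omega
        have e4 : (k - 1) / 2 = j - 1 := by omega
        have e5 : (k + 1 + 1) / 2 = j + 1 := by omega
        rw [e1, e2, e3, e4, e5]
        have hl := hlog j (by omega) (by omega)
        have hA := hpos (j - 1)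
        have hB := hpos j
        have hC := hpos (j + 1)
        have hamgm : 2 * Phi p n j < Phi p n (j - 1) + Phi p n (j + 1) := by
          nlinarith [sq_nonneg (Phi p n (j - 1) - Phi p n (j + 1))]
        have t1 : 0 < Phi p n j ^ 2 *
            (Phi p n (j - 1) * Phi p n (j + 1) - Phi p n j ^ 2) :=
          mul_pos (by positivity) (by linarith)
        have t2 : 0 < p * (1 - p) * Phi p n j *
            (Phi p n (j - 1) + Phi p n (j + 1) - 2 * Phi p n j) :=
          mul_pos (mul_pos hc hB) (by linarith)
        nlinarith [t1, t2]
      · -- k = 2 j + 1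
        have e1 : (k + 1) / 2 = j + 1 := by omega
        have e2 : k / 2 = j := by omega
        have e3 : (k - 1 + 1) / 2 = j := by omega
        have e4 : (k - 1) / 2 = j := by omega
        have e5 : (k + 1 + 1) / 2 = j + 1 := by omega
        rw [e1, e2, e3, e4, e5]
        have hd := hdec j (by omega)
        have hg : 0 < Phi p n j - Phi p n (j + 1) := by linarith
        have t1 : 0 < p * (1 - p) * ((Phi p n j - Phi p n (j + 1)) *
            (Phi p n j - Phi p n (j + 1))) := mul_pos hc (mul_pos hg hg)
        nlinarith [t1]

/-- the ratio `Phi (k+1) / Phi k` is strictly increasing -/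
theorem Phi_ratio {p : ℝ} (hp1 : 1/2 < p) (hp2 : p < 1) (n : ℕ) :
    ∀ (d b : ℕ), b + 2 + d ≤ 2 ^ n →
      Phi p n (b + 1 + d) * Phi p n (b + 1) < Phi p n (b + 2 + d) * Phi p n b := by
  intro d
  induction d with
  | zero =>
    intro b hb
    have hl := (Phi_inv hp1 hp2 n).2 (b + 1) (by omega) (by omega)
    simp only [Nat.add_sub_cancel] at hl
    have e : b + 1 + 0 = b + 1 := by omega
    have e2 : b + 2 + 0 = b + 1 + 1 := by omega
    rw [e, e2]
    nlinarith [hl]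
  | succ d ih =>
    intro b hb
    have hIH := ih b (by omega)
    have hl := (Phi_inv hp1 hp2 n).2 (b + 2 + d) (by omega) (by omega)
    have e : b + 2 + d - 1 = b + 1 + d := by omega
    rw [e] at hl
    have p0 := Phi_pos hp1 hp2 n b
    have p1 := Phi_pos hp1 hp2 n (b + 1)
    have p2 := Phi_pos hp1 hp2 n (b + 1 + d)
    have p3 := Phi_pos hp1 hp2 n (b + 2 + d)
    have p4 := Phi_pos hp1 hp2 n (b + 2 + d + 1)
    have e2 : b + 1 + (d + 1) = b + 2 + d := by omega
    have e3 : b + 2 + (d + 1) = b + 2 + d + 1 := by omega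
    rw [e2, e3]
    nlinarith [mul_lt_mul_of_pos_right hl p1, mul_lt_mul_of_pos_right hIH p4,
      mul_pos p3 p1]

/-- moving one `1` from the larger side to the smaller side strictly increases `Bp` -/
theorem fp_swap_lt {p : ℝ} (hp1 : 1/2 < p) (hp2 : p < 1) (n a b : ℕ)
    (hab : b + 2 ≤ a) (ha : a ≤ 2 ^ n) :
    fp p (Mv p n a) (Mv p n b) < fp p (Mv p n (a - 1)) (Mv p n (b + 1)) := by
  obtain ⟨d, rfl⟩ : ∃ d, a = b + 2 + d := ⟨a - b - 2, by omega⟩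
  have key : Phi p n (b + 2 + d - 1) * Phi p n (b + 1)
      < Phi p n (b + 2 + d) * Phi p n b := by
    have e : b + 2 + d - 1 = b + 1 + d := by omega
    rw [e]
    exact Phi_ratio hp1 hp2 n d b (by omega)
  have h1 : p + (1 - 2 * p) * fp p (Mv p n (b + 2 + d)) (Mv p n b)
      = Phi p n (b + 2 + d) * Phi p n b + p * (1 - p) := Phi_fp p _ _
  have h2 : p + (1 - 2 * p) * fp p (Mv p n (b + 2 + d - 1)) (Mv p n (b + 1))
      = Phi p n (b + 2 + d - 1) * Phi p n (b + 1) + p * (1 - p) := Phi_fp p _ _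
  by_contra hcon
  push_neg at hcon
  have hmul : (1 - 2 * p) * fp p (Mv p n (b + 2 + d)) (Mv p n b)
      ≤ (1 - 2 * p) * fp p (Mv p n (b + 2 + d - 1)) (Mv p n (b + 1)) :=
    mul_le_mul_of_nonpos_left hcon (by linarith)
  linarith

/-- balancing a split all the way -/
theorem balance {p : ℝ} (hp1 : 1/2 < p) (hp2 : p < 1) (n : ℕ) :
    ∀ (d a b : ℕ), a = b + d → a ≤ 2 ^ n →
      fp p (Mv p n a) (Mv p n b)
        ≤ fp p (Mv p n ((a + b + 1) / 2)) (Mv p n ((a + b) / 2)) ∧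
      (2 ≤ d → fp p (Mv p n a) (Mv p n b)
        < fp p (Mv p n ((a + b + 1) / 2)) (Mv p n ((a + b) / 2))) := by
  intro d
  induction d using Nat.strong_induction_on with
  | _ d ih =>
    intro a b hab ha
    match d, hab with
    | 0, hab =>
      have e1 : (a + b + 1) / 2 = a := by omega
      have e2 : (a + b) / 2 = b := by omega
      rw [e1, e2]
      exact ⟨le_refl _, by omega⟩
    | 1, hab =>
      have e1 : (a + b + 1) / 2 = a := by omega
      have e2 : (a + b) / 2 = b := by omega
      rw [e1, e2]
      exact ⟨le_refl _, by omega⟩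
    | (d + 2), hab =>
      have hlt := fp_swap_lt hp1 hp2 n a b (by omega) ha
      have hrec := ih d (by omega) (a - 1) (b + 1) (by omega) (by omega)
      have e : a - 1 + (b + 1) = a + b := by omega
      rw [e] at hrec
      exact ⟨le_of_lt (lt_of_lt_of_le hlt hrec.1), fun _ => lt_of_lt_of_le hlt hrec.1⟩

/-! ### BTequiv basics -/

theorem btequiv_symm {α : Type} : ∀ {n : ℕ} {s t : BT α n}, BTequiv s t → BTequiv t s
  | 0, .leaf _, .leaf _, h => h.symm
  | _ + 1, .node L R, .node L' R', h => by
    rcases h with ⟨h1, h2⟩ | ⟨h1, h2⟩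
    · exact Or.inl ⟨btequiv_symm h1, btequiv_symm h2⟩
    · exact Or.inr ⟨btequiv_symm h2, btequiv_symm h1⟩

theorem btequiv_trans {α : Type} :
    ∀ {n : ℕ} {s t u : BT α n}, BTequiv s t → BTequiv t u → BTequiv s u
  | 0, .leaf _, .leaf _, .leaf _, h1, h2 => h1.trans h2
  | _ + 1, .node L R, .node L' R', .node L'' R'', h1, h2 => by
    rcases h1 with ⟨ha, hb⟩ | ⟨ha, hb⟩ <;> rcases h2 with ⟨hc, hd⟩ | ⟨hc, hd⟩
    · exact Or.inl ⟨btequiv_trans ha hc, btequiv_trans hb hd⟩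
    · exact Or.inr ⟨btequiv_trans ha hc, btequiv_trans hb hd⟩
    · exact Or.inr ⟨btequiv_trans ha hd, btequiv_trans hb hc⟩
    · exact Or.inl ⟨btequiv_trans ha hd, btequiv_trans hb hc⟩

theorem btequiv_nodeswap {α : Type} {n : ℕ} {L R : BT α n} {s : BT α (n + 1)}
    (h : BTequiv (.node R L) s) : BTequiv (.node L R) s := by
  cases s with
  | node C D =>
    rcases h with ⟨h1, h2⟩ | ⟨h1, h2⟩
    · exact Or.inr ⟨h2, h1⟩
    · exact Or.inl ⟨h2, h1⟩

/-! ### Main induction -/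

theorem Bp_node (p : ℝ) {n : ℕ} (L R : BT ℝ n) :
    Bp p (.node L R) = fp p (Bp p L) (Bp p R) := rfl

theorem main_node {p : ℝ} (hp1 : 1/2 < p) (hp2 : p < 1) {n : ℕ} {L R : BT ℝ n}
    (hL : ZeroOne L) (hR : ZeroOne R)
    (ihL : Bp p L ≤ Mv p n (ones L) ∧
      (Bp p L = Mv p n (ones L) → BTequiv L (canonT n (ones L))))
    (ihR : Bp p R ≤ Mv p n (ones R) ∧
      (Bp p R = Mv p n (ones R) → BTequiv R (canonT n (ones R))))
    (hba : ones R ≤ ones L) :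
    Bp p (BT.node L R) ≤ Mv p (n + 1) (ones (BT.node L R)) ∧
      (Bp p (BT.node L R) = Mv p (n + 1) (ones (BT.node L R)) →
        BTequiv (BT.node L R) (canonT (n + 1) (ones (BT.node L R)))) := by
  have ha2 : ones L ≤ 2 ^ n := ones_le L
  have hb2 : ones R ≤ 2 ^ n := ones_le R
  obtain ⟨hBL0, hBL1⟩ := Bp_mem hp1 hp2 L hL
  obtain ⟨hBR0, hBR1⟩ := Bp_mem hp1 hp2 R hR
  obtain ⟨hMa0, hMa1⟩ := Mv_mem hp1 hp2 n (ones L)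
  obtain ⟨hMb0, hMb1⟩ := Mv_mem hp1 hp2 n (ones R)
  rw [ones_node]
  have s1 : fp p (Bp p L) (Bp p R) ≤ fp p (Mv p n (ones L)) (Bp p R) :=
    fp_mono_left hp1 hp2 ihL.1 hBR0 hBR1
  have s2 : fp p (Mv p n (ones L)) (Bp p R)
      ≤ fp p (Mv p n (ones L)) (Mv p n (ones R)) := by
    rw [fp_comm p (Mv p n (ones L)) (Bp p R),
      fp_comm p (Mv p n (ones L)) (Mv p n (ones R))]
    exact fp_mono_left hp1 hp2 ihR.1 hMa0 hMa1
  have hbal := balance hp1 hp2 n (ones L - ones R) (ones L) (ones R) (by omega) ha2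
  have hMeq : Mv p (n + 1) (ones L + ones R)
      = fp p (Mv p n ((ones L + ones R + 1) / 2)) (Mv p n ((ones L + ones R) / 2)) :=
    Mv_succ p n _
  have hle : Bp p (BT.node L R) ≤ Mv p (n + 1) (ones L + ones R) := by
    rw [Bp_node, hMeq]
    exact le_trans s1 (le_trans s2 hbal.1)
  refine ⟨hle, fun heq => ?_⟩
  -- equality analysis
  have e1 : Bp p L = Mv p n (ones L) := by
    by_contra hne
    have hlt : Bp p L < Mv p n (ones L) := lt_of_le_of_ne ihL.1 hne
    have := fp_strict_left hp1 hp2 hlt hBR0 hBR1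
    rw [Bp_node, hMeq] at heq
    linarith [hbal.1]
  have e2 : Bp p R = Mv p n (ones R) := by
    by_contra hne
    have hlt : Bp p R < Mv p n (ones R) := lt_of_le_of_ne ihR.1 hne
    have hstep : fp p (Mv p n (ones L)) (Bp p R)
        < fp p (Mv p n (ones L)) (Mv p n (ones R)) := by
      rw [fp_comm p (Mv p n (ones L)) (Bp p R),
        fp_comm p (Mv p n (ones L)) (Mv p n (ones R))]
      exact fp_strict_left hp1 hp2 hlt hMa0 hMa1
    rw [Bp_node, hMeq] at heq
    linarith [hbal.1]
  have hd : ones L - ones R < 2 := by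
    by_contra hcon
    push_neg at hcon
    have := hbal.2 hcon
    rw [Bp_node, hMeq] at heq
    linarith
  have ea : ones L = (ones L + ones R + 1) / 2 := by omega
  have eb : ones R = (ones L + ones R) / 2 := by omega
  have hL2 : BTequiv L (canonT n ((ones L + ones R + 1) / 2)) := by
    rw [← ea]; exact ihL.2 e1
  have hR2 : BTequiv R (canonT n ((ones L + ones R) / 2)) := by
    rw [← eb]; exact ihR.2 e2
  exact Or.inl ⟨hL2, hR2⟩

theorem main {p : ℝ} (hp1 : 1/2 < p) (hp2 : p < 1) :
    ∀ {n : ℕ} (t : BT ℝ n), ZeroOne t →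
      Bp p t ≤ Mv p n (ones t) ∧
      (Bp p t = Mv p n (ones t) → BTequiv t (canonT n (ones t)))
  | 0, .leaf x, h => by
    rcases h x (by simp [BT.leaves]) with rfl | rfl
    · have h0 : ones (BT.leaf (0:ℝ)) = 0 := by norm_num [ones, BT.leaves]
      rw [h0]
      have hMv : Mv p 0 0 = 0 := by simp [Mv, canonT, Bp]
      have hb : Bp p (BT.leaf (0:ℝ)) = 0 := rfl
      refine ⟨by rw [hMv, hb], fun _ => ?_⟩
      show (0:ℝ) = if (0:ℕ) = 0 then (0:ℝ) else 1
      norm_num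
    · have h0 : ones (BT.leaf (1:ℝ)) = 1 := by norm_num [ones, BT.leaves]
      rw [h0]
      have hMv : Mv p 0 1 = 1 := by simp [Mv, canonT, Bp]
      have hb : Bp p (BT.leaf (1:ℝ)) = 1 := rfl
      refine ⟨by rw [hMv, hb], fun _ => ?_⟩
      show (1:ℝ) = if (1:ℕ) = 0 then (0:ℝ) else 1
      norm_num
  | n + 1, .node L R, h => by
    obtain ⟨hL, hR⟩ := zeroOne_node h
    have ihL := main hp1 hp2 L hL
    have ihR := main hp1 hp2 R hR
    rcases le_total (ones R) (ones L) with hba | hba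
    · exact main_node hp1 hp2 hL hR ihL ihR hba
    · have hsw := main_node hp1 hp2 hR hL ihR ihL hba
      have hBeq : Bp p (BT.node R L) = Bp p (BT.node L R) := by
        rw [Bp_node, Bp_node, fp_comm]
      have hOeq : ones (BT.node R L) = ones (BT.node L R) := by
        rw [ones_node, ones_node, Nat.add_comm]
      rw [hBeq, hOeq] at hsw
      exact ⟨hsw.1, fun heq => btequiv_nodeswap (hsw.2 heq)⟩

end BigOpt


/-- any two big-optimal trees of depth `n` with exactly `k` ones are
isomorphic (equal up to swapping children subtrees at internal nodes). -/
theorem big_optimal_unique (p : ℝ) (hp : p ∈ Set.Ioo (1 / 2 : ℝ) 1)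
    (n : ℕ) (hn : 1 ≤ n) (k : ℕ) (hk : k ≤ 2 ^ n)
    (t t' : BT ℝ n)
    (ht01 : ZeroOne t) (htk : ones t = k)
    (hmax : ∀ s : BT ℝ n, ZeroOne s → ones s = k → Bp p s ≤ Bp p t)
    (ht01' : ZeroOne t') (htk' : ones t' = k)
    (hmax' : ∀ s : BT ℝ n, ZeroOne s → ones s = k → Bp p s ≤ Bp p t') :
    BTequiv t t' := by
  obtain ⟨hp1, hp2⟩ := hp
  have hct : ZeroOne (BigOpt.canonT n k) := BigOpt.canonT_zeroOne n k
  have hck : ones (BigOpt.canonT n k) = k := BigOpt.canonT_ones n k hk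
  have hMvC : Bp p (BigOpt.canonT n k) = BigOpt.Mv p n k := rfl
  have h1 := BigOpt.main hp1 hp2 t ht01
  rw [htk] at h1
  have h1' := BigOpt.main hp1 hp2 t' ht01'
  rw [htk'] at h1'
  have hBt : Bp p t = BigOpt.Mv p n k :=
    le_antisymm h1.1 (by rw [← hMvC]; exact hmax _ hct hck)
  have hBt' : Bp p t' = BigOpt.Mv p n k :=
    le_antisymm h1'.1 (by rw [← hMvC]; exact hmax' _ hct hck)
  exact BigOpt.btequiv_trans (h1.2 hBt) (BigOpt.btequiv_symm (h1'.2 hBt'))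
end
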